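/- Let F : A ‚Üí k-Mod be a functor on a small additive category. Then cr_d(F) = 0 if and only if cr_d^{op}(F) = 0, where cr_d^{op}(F) : ŌĄ_d F ‚Üí F is the alternating sum ő£_{I‚äÜ{0,...,d}} (‚ąí1)^{|I|} F(p_I) over the natural projections p_I : t_d ‚Üí id. -/

import Mathlib

open CategoryTheory CategoryTheory.Limits

noncomputable section

variable {A : Type*} [Category A] [Preadditive A] [HasFiniteBiproducts A]
variable {D : Type*} [Category D] [Preadditive D]

/-- `t d : a ↦ a^{⊕(d+1)}` -/
@[simps] def tFun (A : Type*) [Category A] [Preadditive A] [HasFiniteBiproducts A] (d : ℕ) :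
    A ⥤ A where
  obj a := ⨁ (fun _ : Fin (d + 1) => a)
  map f := biproduct.map (fun _ => f)

/-- `u_I : id ⟶ t_d` -/
@[simps] def uNat (A : Type*) [Category A] [Preadditive A] [HasFiniteBiproducts A] (d : ℕ)
    (I : Finset (Fin (d + 1))) : 𝟭 A ⟶ tFun A d where
  app a := biproduct.lift (fun i => if i ∈ I then 𝟙 a else 0)
  naturality a b f := by
    change f ≫ (biproduct.lift (fun i => if i ∈ I then 𝟙 b else 0) : b ⟶ ⨁ (fun _ : Fin (d + 1) => b)) =
      biproduct.lift (fun i => if i ∈ I then 𝟙 a else 0) ≫ biproduct.map (fun _ => f)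
    refine biproduct.hom_ext _ _ fun j => ?_
    by_cases h : j ∈ I <;> simp [h]

/-- `p_I : t_d ⟶ id` -/
@[simps] def pNat (A : Type*) [Category A] [Preadditive A] [HasFiniteBiproducts A] (d : ℕ)
    (I : Finset (Fin (d + 1))) : tFun A d ⟶ 𝟭 A where
  app a := biproduct.desc (fun i => if i ∈ I then 𝟙 a else 0)
  naturality a b f := by
    change (biproduct.map (fun _ => f) : ⨁ (fun _ : Fin (d + 1) => a) ⟶ ⨁ (fun _ : Fin (d + 1) => b)) ≫
      biproduct.desc (fun i => if i ∈ I then 𝟙 b else 0) = biproduct.desc (fun i => if i ∈ I then 𝟙 a else 0) ≫ f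
    refine biproduct.hom_ext' _ _ fun j => ?_
    by_cases h : j ∈ I <;> simp [h]

/-- the cross effect `cr_d(F) : F ⟶ τ_d F` -/
@[simps] def crNat (d : ℕ) (F : A ⥤ D) : F ⟶ tFun A d ⋙ F where
  app a := ∑ I : Finset (Fin (d + 1)), (-1 : ℤ) ^ I.card • F.map ((uNat A d I).app a)
  naturality a b f := by
    simp only [Functor.comp_map, Preadditive.comp_sum, Preadditive.sum_comp,
      Preadditive.comp_zsmul, Preadditive.zsmul_comp]
    refine Finset.sum_congr rfl (fun I _ => ?_)
    have h := (uNat A d I).naturality f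
    simp only [Functor.id_map] at h
    rw [← F.map_comp, ← F.map_comp, h]

/-- the co-cross effect `cr_d^{op}(F) : τ_d F ⟶ F` -/
@[simps] def crOpNat (d : ℕ) (F : A ⥤ D) : tFun A d ⋙ F ⟶ F where
  app a := ∑ I : Finset (Fin (d + 1)), (-1 : ℤ) ^ I.card • F.map ((pNat A d I).app a)
  naturality a b f := by
    simp only [Functor.comp_map, Preadditive.comp_sum, Preadditive.sum_comp,
      Preadditive.comp_zsmul, Preadditive.zsmul_comp]
    refine Finset.sum_congr rfl (fun I _ => ?_)
    have h := (pNat A d I).naturality f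
    simp only [Functor.id_map] at h
    rw [← F.map_comp, ← F.map_comp, h]

/-- `F` is polynomial of degree at most `d`. -/
def PolyDeg (d : ℕ) (F : A ⥤ D) : Prop := crNat d F = 0

end

/-!
Let `π_I` (`coordProj`) be the idempotent of `a^{⊕(d+1)}` projecting onto the summands indexed
by `I`, and `e_a = ∑_I (-1)^|I| F(π_I)` (`crEndo`). Since `u_I = u_{[d]} ≫ π_I` and
`p_I = π_I ≫ p_{[d]}`, both cross effects factor through `e`: `cr_d(F)_a = F(u_{[d]}) ≫ e_a` and
`cr_d^{op}(F)_a = e_a ≫ F(p_{[d]})`. Conversely, evaluating at `a^{⊕(d+1)}`,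
`π_I = u_I ≫ desc_j π_{j}` and `π_I = lift_j π_{j} ≫ p_I`, so `e_a` factors through either cross
effect there. Hence each cross effect vanishes iff `e` does.
-/

noncomputable section

open Finset

variable {A : Type*} [Category A] [Preadditive A] [HasFiniteBiproducts A]

section Biproduct

variable {ι : Type} [Fintype ι] [DecidableEq ι] (I : Finset ι) (a : A)

lemma biproduct.lift_ite_eq_lift_comp_map :
    biproduct.lift (fun i => if i ∈ I then 𝟙 a else 0) =
      biproduct.lift (fun i => if i ∈ univ then 𝟙 a else 0) ≫
        biproduct.map (fun i => if i ∈ I then 𝟙 a else 0) := by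
  ext j
  by_cases h : j ∈ I <;> simp [h]

lemma biproduct.desc_ite_eq_map_comp_desc :
    biproduct.desc (fun i => if i ∈ I then 𝟙 a else 0) =
      biproduct.map (fun i => if i ∈ I then 𝟙 a else 0) ≫
        biproduct.desc (fun i => if i ∈ univ then 𝟙 a else 0) := by
  ext j
  by_cases h : j ∈ I <;> simp [h]

lemma biproduct.lift_ite_comp_desc_map_single :
    biproduct.lift (fun i => if i ∈ I then 𝟙 (⨁ fun _ : ι => a) else 0) ≫
      biproduct.desc (fun j => biproduct.map fun i => if i ∈ ({j} : Finset ι) then 𝟙 a else 0) =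
        biproduct.map (fun i => if i ∈ I then 𝟙 a else 0) := by
  rw [biproduct.lift_desc]
  refine biproduct.hom_ext _ _ fun k => ?_
  by_cases h : k ∈ I <;> simp [Preadditive.sum_comp, comp_ite, h]

lemma biproduct.lift_map_single_comp_desc_ite :
    biproduct.lift (fun j => biproduct.map fun i => if i ∈ ({j} : Finset ι) then 𝟙 a else 0) ≫
      biproduct.desc (fun i => if i ∈ I then 𝟙 (⨁ fun _ : ι => a) else 0) =
        biproduct.map (fun i => if i ∈ I then 𝟙 a else 0) := by
  rw [biproduct.lift_desc]
  refine biproduct.hom_ext _ _ fun k => ?_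
  by_cases h : k ∈ I <;> simp [Preadditive.sum_comp, comp_ite, h]

end Biproduct

section CoordProj

variable (d : ℕ)

def coordProj (I : Finset (Fin (d + 1))) (a : A) : (tFun A d).obj a ⟶ (tFun A d).obj a :=
  biproduct.map fun i => if i ∈ I then 𝟙 a else 0

def coordProjDesc (a : A) : (tFun A d).obj ((tFun A d).obj a) ⟶ (tFun A d).obj a :=
  biproduct.desc fun j => coordProj d {j} a

def coordProjLift (a : A) : (tFun A d).obj a ⟶ (tFun A d).obj ((tFun A d).obj a) :=
  biproduct.lift fun j => coordProj d {j} a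

variable (I : Finset (Fin (d + 1))) (a : A)

lemma uNat_app_univ_comp_coordProj :
    (uNat A d univ).app a ≫ coordProj d I a = (uNat A d I).app a :=
  (biproduct.lift_ite_eq_lift_comp_map I a).symm

lemma coordProj_comp_pNat_app_univ :
    coordProj d I a ≫ (pNat A d univ).app a = (pNat A d I).app a :=
  (biproduct.desc_ite_eq_map_comp_desc I a).symm

lemma uNat_app_comp_coordProjDesc :
    (uNat A d I).app ((tFun A d).obj a) ≫ coordProjDesc d a = coordProj d I a :=
  biproduct.lift_ite_comp_desc_map_single I a

lemma coordProjLift_comp_pNat_app :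
    coordProjLift d a ≫ (pNat A d I).app ((tFun A d).obj a) = coordProj d I a :=
  biproduct.lift_map_single_comp_desc_ite I a

end CoordProj

section CrossEffect

variable {D : Type*} [Category D] [Preadditive D] (d : ℕ) (F : A ⥤ D)

def crEndo (a : A) : F.obj ((tFun A d).obj a) ⟶ F.obj ((tFun A d).obj a) :=
  ∑ I : Finset (Fin (d + 1)), (-1 : ℤ) ^ I.card • F.map (coordProj d I a)

lemma crNat_app_eq_comp_crEndo (a : A) :
    (crNat d F).app a = F.map ((uNat A d univ).app a) ≫ crEndo d F a := by
  simp only [crNat_app, crEndo, Preadditive.comp_sum, Preadditive.comp_zsmul, ← F.map_comp,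
    uNat_app_univ_comp_coordProj]

lemma crOpNat_app_eq_crEndo_comp (a : A) :
    (crOpNat d F).app a = crEndo d F a ≫ F.map ((pNat A d univ).app a) := by
  simp only [crOpNat_app, crEndo, Preadditive.sum_comp, Preadditive.zsmul_comp, ← F.map_comp,
    coordProj_comp_pNat_app_univ]

lemma crEndo_eq_crNat_app_comp (a : A) :
    crEndo d F a = (crNat d F).app ((tFun A d).obj a) ≫ F.map (coordProjDesc d a) := by
  simp only [crNat_app, crEndo, Preadditive.sum_comp, Preadditive.zsmul_comp, ← F.map_comp,
    uNat_app_comp_coordProjDesc]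

lemma crEndo_eq_comp_crOpNat_app (a : A) :
    crEndo d F a = F.map (coordProjLift d a) ≫ (crOpNat d F).app ((tFun A d).obj a) := by
  simp only [crOpNat_app, crEndo, Preadditive.comp_sum, Preadditive.comp_zsmul, ← F.map_comp,
    coordProjLift_comp_pNat_app]

lemma crNat_eq_zero_iff : crNat d F = 0 ↔ ∀ a, crEndo d F a = 0 := by
  refine ⟨fun h a => ?_, fun h => ?_⟩
  · rw [crEndo_eq_crNat_app_comp, h, NatTrans.app_zero, zero_comp]
  · ext a
    rw [crNat_app_eq_comp_crEndo, h, comp_zero, NatTrans.app_zero]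

lemma crOpNat_eq_zero_iff : crOpNat d F = 0 ↔ ∀ a, crEndo d F a = 0 := by
  refine ⟨fun h a => ?_, fun h => ?_⟩
  · rw [crEndo_eq_comp_crOpNat_app, h, NatTrans.app_zero, comp_zero]
  · ext a
    rw [crOpNat_app_eq_crEndo_comp, h, zero_comp, NatTrans.app_zero]

lemma crNat_eq_zero_iff_crOpNat_eq_zero : crNat d F = 0 ↔ crOpNat d F = 0 :=
  (crNat_eq_zero_iff d F).trans (crOpNat_eq_zero_iff d F).symm

end CrossEffect

end

/-- `cr_d(F) = 0` iff `cr_d^{op}(F) = 0`. -/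
theorem stmt3 (k : Type) [CommRing k] (A : Type) [SmallCategory A] [Preadditive A]
    [HasFiniteBiproducts A] (d : ℕ) (F : A ⥤ ModuleCat k) :
    crNat d F = 0 ↔ crOpNat d F = 0 :=
  crNat_eq_zero_iff_crOpNat_eq_zero d F
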